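/- Let A be a unital C*-algebra and let a ∈ A have a Moore-Penrose inverse a†. Then the following statements are equivalent: (i) a is EP; (ii) there exists s ∈ A with s⁻¹(0) = 0 and a* = sa; (iii) there exist s₁, s₂ ∈ A with a* = s₁a and a = s₂a*; (iv) there exists u ∈ A with uA = A and a* = au; (v) there exists an invertible v ∈ A such that a*a = v(aa*); (vi) there exists an invertible w ∈ A such that a*a = (aa*)w; (vii) there exist z₁, z₂ ∈ A with a*a = az₁a* and aa* = a*z₂a. -/

import Mathlib

/-! Write `p = a a†` and `q = a† a`. Since `p = (a†)* a*`, an equation `a* x = a* y` forces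
`p x = p y`. Applied to `a` and, dually, to `a*` (whose Moore–Penrose inverse is `(a†)*`), this
shows that each of (iii), (v), (vii) yields `a p = a` and `q a = a`; so does (ii), where the
injectivity of `s` gives `a p = a`. These two identities give `p = (q a) a† = a† (a p) = q`.
Conversely, if `p = q` then `b = a + 1 - p` is a unit (with inverse `a† + 1 - p`) commuting
with `p`, and `a = b p`; hence `a* = (b* b⁻¹) a = a (b⁻¹ b*)` and `a* a = b* b (b b*)⁻¹ a a*`.
Finally (iv) gives (iii), (v) and (vi) are adjoint to each other, and (vii) follows from (iii)
by taking adjoints. -/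

noncomputable section

/-- `x` is a Moore–Penrose inverse of `a` in a C*-algebra: `axa = a`, `xax = x`, and
`ax`, `xa` are self-adjoint. -/
def IsMPInvStar {A : Type*} [Ring A] [StarRing A] (a x : A) : Prop :=
  a * x * a = a ∧ x * a * x = x ∧ IsSelfAdjoint (a * x) ∧ IsSelfAdjoint (x * a)

variable {A : Type*} [NormedRing A] [StarRing A] [CStarRing A] [CompleteSpace A]
  [NormedAlgebra ℂ A] [StarModule ℂ A]

theorem Units.setOf_mul_eq_zero {R : Type*} [Ring R] (u : Rˣ) :
    {x : R | (u : R) * x = 0} = {0} := by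
  ext x
  simp [Units.mul_right_eq_zero]

theorem Units.setOf_exists_eq_mul {R : Type*} [Monoid R] (u : Rˣ) :
    {y : R | ∃ x, y = u * x} = Set.univ :=
  Set.eq_univ_of_forall fun y => ⟨↑u⁻¹ * y, by rw [Units.mul_inv_cancel_left]⟩

section StarRing

variable {R : Type*} [Ring R] [StarRing R]

theorem exists_isUnit_eq_mul_iff_of_isSelfAdjoint {x y : R} (hx : IsSelfAdjoint x)
    (hy : IsSelfAdjoint y) : (∃ v, IsUnit v ∧ x = v * y) ↔ ∃ w, IsUnit w ∧ x = y * w := by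
  constructor
  · rintro ⟨v, hv, h⟩
    exact ⟨star v, hv.star, by rw [← hx.star_eq, h, star_mul, hy.star_eq]⟩
  · rintro ⟨w, hw, h⟩
    exact ⟨star w, hw.star, by rw [← hx.star_eq, h, star_mul, hy.star_eq]⟩

theorem exists_star_mul_self_eq_and_self_mul_star_eq {a s₁ s₂ : R}
    (h₁ : star a = s₁ * a) (h₂ : a = s₂ * star a) :
    ∃ z₁ z₂, star a * a = a * z₁ * star a ∧ a * star a = star a * z₂ * a := by
  have h₁' : a = star a * star s₁ := by simpa using congrArg star h₁
  have h₂' : star a = a * star s₂ := by simpa using congrArg star h₂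
  refine ⟨star s₂ * s₂, star s₁ * s₁, ?_, ?_⟩
  · calc star a * a = a * star s₂ * (s₂ * star a) := by rw [← h₂, ← h₂']
      _ = a * (star s₂ * s₂) * star a := by simp only [mul_assoc]
  · calc a * star a = star a * star s₁ * (s₁ * a) := by rw [← h₁, ← h₁']
      _ = star a * (star s₁ * s₁) * a := by simp only [mul_assoc]

theorem star_eq_mul_and_eq_mul_star_of_star_eq_mul {a u x : R} (heq : star a = a * u)
    (hx : 1 = u * x) : star a = star x * a ∧ a = star u * star a := by
  have ha : a = star a * x := by rw [heq, mul_assoc, ← hx, mul_one]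
  exact ⟨by simpa using congrArg star ha, by simpa using congrArg star heq⟩

theorem IsSelfAdjoint.commute_star {p x : R} (hp : IsSelfAdjoint p) (hc : Commute p x) :
    Commute p (star x) := by
  rwa [← commute_star_comm, hp.star_eq]

section UnitTimesProjection

variable {a p : R} {b : Rˣ}

theorem star_eq_units_mul (hp : IsSelfAdjoint p) (hc : Commute p b) (ha : b * p = a) :
    star a = ↑(star b * b⁻¹) * a := by
  subst ha
  rw [star_mul, hp.star_eq, (hp.commute_star hc).eq, Units.val_mul, Units.coe_star, mul_assoc,
    Units.inv_mul_cancel_left]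

theorem star_eq_mul_units (hp : IsSelfAdjoint p) (hc : Commute p b) (ha : b * p = a) :
    star a = a * ↑(b⁻¹ * star b) := by
  subst ha
  rw [star_mul, hp.star_eq, Units.val_mul, Units.coe_star, ← hc.eq, mul_assoc,
    Units.mul_inv_cancel_left]

theorem star_mul_self_eq_units_mul (hp : IsSelfAdjoint p) (hc : Commute p b)
    (ha : b * p = a) : star a * a = ↑(star b * b * (b * star b)⁻¹) * (a * star a) := by
  subst ha
  have hc' := hp.commute_star hc
  have h₁ : star (↑b * p) * (↑b * p) = star (b : R) * b * (p * p) := by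
    rw [star_mul, hp.star_eq, hc'.eq, mul_assoc, ← mul_assoc p, hc.eq]
    simp only [mul_assoc]
  have h₂ : ↑b * p * star (↑b * p) = ↑(b * star b) * (p * p) := by
    rw [star_mul, hp.star_eq, mul_assoc, ← mul_assoc p, (hc'.mul_left hc').eq, Units.val_mul,
      Units.coe_star, mul_assoc]
  rw [h₁, h₂, Units.val_mul, mul_assoc (↑(star b * b) : R), Units.inv_mul_cancel_left,
    Units.val_mul, Units.coe_star]

end UnitTimesProjection

end StarRing

namespace IsMPInvStar

variable {R : Type*} [Ring R] [StarRing R] {a ad : R}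

protected theorem star (h : IsMPInvStar a ad) : IsMPInvStar (star a) (star ad) := by
  obtain ⟨h₁, h₂, h₃, h₄⟩ := h
  refine ⟨?_, ?_, ?_, ?_⟩
  · simpa only [star_mul, mul_assoc] using congrArg star h₁
  · simpa only [star_mul, mul_assoc] using congrArg star h₂
  · simpa only [star_mul] using IsSelfAdjoint.star_iff.2 h₄
  · simpa only [star_mul] using IsSelfAdjoint.star_iff.2 h₃

theorem star_inv_mul_star (h : IsMPInvStar a ad) : star ad * star a = a * ad := by
  rw [← star_mul, h.2.2.1.star_eq]

theorem star_mul_mul_inv (h : IsMPInvStar a ad) : star a * (a * ad) = star a := by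
  calc star a * (a * ad) = star (a * ad * a) := by rw [star_mul, h.2.2.1.star_eq]
    _ = star a := by rw [h.1]

theorem mul_inv_mul_eq_of_star_mul_eq (h : IsMPInvStar a ad) {x y : R}
    (hxy : star a * x = star a * y) : a * ad * x = a * ad * y := by
  rw [← h.star_inv_mul_star, mul_assoc, hxy, mul_assoc]

theorem mul_mul_inv_eq_self_of_star_mul_self_eq (h : IsMPInvStar a ad) {y : R}
    (hy : star a * a = y * star a) : a * a * ad = a := by
  have hstar : star a * (a * a * ad) = star a * a := by
    rw [mul_assoc, ← mul_assoc (star a), hy, mul_assoc, h.star_mul_mul_inv, ← hy]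
  have := h.mul_inv_mul_eq_of_star_mul_eq hstar
  rwa [h.1, ← mul_assoc, ← mul_assoc, h.1] at this

theorem inv_mul_mul_eq_self_of_self_mul_star_eq (h : IsMPInvStar a ad) {y : R}
    (hy : a * star a = y * a) : ad * a * a = a := by
  have := h.star.mul_mul_inv_eq_self_of_star_mul_self_eq (y := y) (by rwa [star_star])
  simpa [mul_assoc] using congrArg star this

theorem commute_iff (h : IsMPInvStar a ad) :
    a * ad = ad * a ↔ a * a * ad = a ∧ ad * a * a = a := by
  refine ⟨fun hc => ⟨by rw [mul_assoc, hc, ← mul_assoc, h.1], by rw [← hc, h.1]⟩,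
    fun ⟨hl, hr⟩ => ?_⟩
  calc a * ad = ad * a * a * ad := by rw [hr]
    _ = ad * (a * a * ad) := by simp only [mul_assoc]
    _ = ad * a := by rw [hl]

theorem exists_star_eq_mul_iff (h : IsMPInvStar a ad) :
    (∃ s, star a = s * a) ↔ ad * a * a = a := by
  refine ⟨fun ⟨s, hs⟩ => h.inv_mul_mul_eq_self_of_self_mul_star_eq (y := a * s) ?_,
    fun hr => ⟨star a * ad, ?_⟩⟩
  · rw [hs, mul_assoc]
  · rw [mul_assoc, ← h.2.2.2.star_eq, ← star_mul, hr]

theorem exists_eq_mul_star_iff (h : IsMPInvStar a ad) :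
    (∃ s, a = s * star a) ↔ a * a * ad = a := by
  refine ⟨fun ⟨s, hs⟩ => h.mul_mul_inv_eq_self_of_star_mul_self_eq (y := star a * s) ?_,
    fun hl => ⟨a * star ad, ?_⟩⟩
  · rw [mul_assoc, ← hs]
  · rw [mul_assoc, h.star_inv_mul_star, ← mul_assoc, hl]

theorem mul_mul_inv_eq_self_of_star_eq_mul (h : IsMPInvStar a ad) {s : R}
    (hs : ∀ x, s * x = 0 → x = 0) (heq : star a = s * a) : a * a * ad = a := by
  refine sub_eq_zero.1 (hs _ ?_)
  rw [mul_sub, ← mul_assoc, ← mul_assoc, ← heq, mul_assoc, h.star_mul_mul_inv, heq, sub_self]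

theorem exists_units_of_commute (h : IsMPInvStar a ad) (hc : a * ad = ad * a) :
    ∃ b : Rˣ, Commute (a * ad) b ∧ ↑b * (a * ad) = a := by
  set p := a * ad with hp
  have hap : a * p = a := by rw [hc, ← mul_assoc, h.1]
  have hpa : p * a = a := h.1
  have hadp : ad * p = ad := by rw [hp, ← mul_assoc, h.2.1]
  have hpad : p * ad = ad := by rw [hc, h.2.1]
  have hpp : p * p = p := by rw [hp, ← mul_assoc, h.1]
  have hbp : (a + 1 - p) * p = a := by
    simp only [add_mul, sub_mul, one_mul, hap, hpp]
    abel
  have hpb : p * (a + 1 - p) = a := by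
    simp only [mul_add, mul_sub, mul_one, hpa, hpp]
    abel
  let b : Rˣ :=
    { val := a + 1 - p
      inv := ad + 1 - p
      val_inv := by
        simp only [add_mul, mul_add, sub_mul, mul_sub, one_mul, mul_one, hap, hpad, hpp, ← hp]
        abel
      inv_val := by
        simp only [add_mul, mul_add, sub_mul, mul_sub, one_mul, mul_one, hadp, hpa, hpp, ← hc]
        abel }
  exact ⟨b, hpb.trans hbp.symm, hbp⟩

end IsMPInvStar

/-- For `a` with Moore–Penrose inverse `a†` in a unital C*-algebra: `a` is EP iff
`a* = sa` with `s⁻¹(0) = 0`, iff `a* = s₁a` and `a = s₂a*`, iff `a* = au` with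
`uA = A`, iff `a*a = v(aa*)` with `v` invertible, iff `a*a = (aa*)w` with `w`
invertible, iff `a*a = az₁a*` and `aa* = a*z₂a`. -/
theorem ep_tfae_star (a ad : A) (had : IsMPInvStar a ad) :
    List.TFAE
      [a * ad = ad * a,
       ∃ s : A, {x : A | s * x = 0} = {0} ∧ star a = s * a,
       ∃ s₁ s₂ : A, star a = s₁ * a ∧ a = s₂ * star a,
       ∃ u : A, {y : A | ∃ x, y = u * x} = Set.univ ∧ star a = a * u,
       ∃ v : A, IsUnit v ∧ star a * a = v * (a * star a),
       ∃ w : A, IsUnit w ∧ star a * a = (a * star a) * w,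
       ∃ z₁ z₂ : A, star a * a = a * z₁ * star a ∧ a * star a = star a * z₂ * a] := by
  have hp : IsSelfAdjoint (a * ad) := had.2.2.1
  tfae_have 1 ↔ 3 := by
    rw [had.commute_iff, ← had.exists_eq_mul_star_iff, ← had.exists_star_eq_mul_iff]
    exact ⟨fun ⟨⟨s₂, h₂⟩, s₁, h₁⟩ => ⟨s₁, s₂, h₁, h₂⟩, fun ⟨s₁, s₂, h₁, h₂⟩ => ⟨⟨s₂, h₂⟩, s₁, h₁⟩⟩
  tfae_have 1 → 2 := fun hc => by
    obtain ⟨b, hcb, hb⟩ := had.exists_units_of_commute hc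
    exact ⟨_, Units.setOf_mul_eq_zero _, star_eq_units_mul hp hcb hb⟩
  tfae_have 2 → 1 := fun ⟨s, hs, heq⟩ => had.commute_iff.2
    ⟨had.mul_mul_inv_eq_self_of_star_eq_mul (fun x hx => hs.subset hx) heq,
      had.exists_star_eq_mul_iff.1 ⟨s, heq⟩⟩
  tfae_have 1 → 4 := fun hc => by
    obtain ⟨b, hcb, hb⟩ := had.exists_units_of_commute hc
    exact ⟨_, Units.setOf_exists_eq_mul _, star_eq_mul_units hp hcb hb⟩
  tfae_have 4 → 3 := fun ⟨u, hu, heq⟩ => by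
    obtain ⟨x, hx⟩ : ∃ x, 1 = u * x := hu.symm.subset (Set.mem_univ 1)
    exact ⟨_, _, star_eq_mul_and_eq_mul_star_of_star_eq_mul heq hx⟩
  tfae_have 1 → 5 := fun hc => by
    obtain ⟨b, hcb, hb⟩ := had.exists_units_of_commute hc
    exact ⟨_, Units.isUnit _, star_mul_self_eq_units_mul hp hcb hb⟩
  tfae_have 5 ↔ 6 := exists_isUnit_eq_mul_iff_of_isSelfAdjoint
    (IsSelfAdjoint.star_mul_self a) (IsSelfAdjoint.mul_star_self a)
  tfae_have 5 → 1 := fun ⟨_, ⟨v, hv⟩, heq⟩ => had.commute_iff.2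
    ⟨had.mul_mul_inv_eq_self_of_star_mul_self_eq (y := v * a) (by rw [heq, ← hv, mul_assoc]),
      had.inv_mul_mul_eq_self_of_self_mul_star_eq (y := ↑v⁻¹ * star a)
        (by rw [mul_assoc, heq, ← hv, Units.inv_mul_cancel_left])⟩
  tfae_have 3 → 7 := fun ⟨_, _, h₁, h₂⟩ => exists_star_mul_self_eq_and_self_mul_star_eq h₁ h₂
  tfae_have 7 → 1 := fun ⟨_, _, h₁, h₂⟩ => had.commute_iff.2
    ⟨had.mul_mul_inv_eq_self_of_star_mul_self_eq h₁,
      had.inv_mul_mul_eq_self_of_self_mul_star_eq h₂⟩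
  tfae_finish
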